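/- In the setup below, for every edge e ∈ δ⁺_v ∩ δ⁻_T (an edge from v into T) the following hold: (1) F^Δ_e(θ) < 1/2 for all θ ∈ [θ1, θ_v]; and (2) all this flow reaches T before θ2, i.e. F^Δ_e(θ1) + (F⁺_e(θ_v) − F⁺_e(θ1)) ≤ F⁻_e(θ2) − F⁻_e(θ1). -/

import Mathlib

open MeasureTheory Set

noncomputable section

/-- A single-sink network: a finite directed graph with integer travel times and
capacities on the edges, a sink node, and network inflow rates at the nodes
supported in `[0, theta0]`. -/
structure Network where
  V : Type
  E : Type
  fintypeV : Fintype V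
  decV : DecidableEq V
  fintypeE : Fintype E
  decE : DecidableEq E
  src : E → V
  dst : E → V
  sink : V
  tau : E → ℕ
  nu : E → ℕ
  tau_pos : ∀ e, 1 ≤ tau e
  nu_pos : ∀ e, 1 ≤ nu e
  theta0 : ℝ
  theta0_nonneg : 0 ≤ theta0
  u : V → ℝ → ℝ
  u_nonneg : ∀ v θ, 0 ≤ u v θ
  u_sink : ∀ θ, u sink θ = 0
  u_integrable : ∀ v, MeasureTheory.Integrable (u v) MeasureTheory.volume
  u_support : ∀ v θ, θ ∉ Set.Icc 0 theta0 → u v θ = 0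

attribute [instance] Network.fintypeV Network.decV Network.fintypeE Network.decE

namespace Network

variable (N : Network)

/-- `N.IsWalkBetween v w p` : the list of edges `p` forms a walk from `v` to `w`. -/
def IsWalkBetween : N.V → N.V → List N.E → Prop
  | v, w, [] => v = w
  | v, w, e :: p => N.src e = v ∧ IsWalkBetween (N.dst e) w p

/-- A walk from `v` to the sink. -/
def IsWalk (v : N.V) (p : List N.E) : Prop := N.IsWalkBetween v N.sink p

/-- The sink is reachable from every node. -/
def Reachable : Prop := ∀ v : N.V, ∃ p, N.IsWalk v p

/-- The graph has no (nonempty) cycles. -/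
def Acyclic : Prop := ∀ v p, N.IsWalkBetween v v p → p = []

/-- Total travel time `τ(G)` of the network. -/
def tauSum : ℝ := ∑ e, (N.tau e : ℝ)

/-- Physical length of a path. -/
def pathTau (p : List N.E) : ℝ := (p.map fun e => (N.tau e : ℝ)).sum

/-- `τ(P_max)`: the maximum physical length of a simple path ending at the sink. -/
def tauPmax : ℝ :=
  sSup { x | ∃ v p, N.IsWalk v p ∧ (v :: p.map N.dst).Nodup ∧ x = N.pathTau p }

/-- Edges leaving `v`. -/
def outEdges (v : N.V) : Finset N.E := Finset.univ.filter fun e => N.src e = v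

/-- Edges entering `v`. -/
def inEdges (v : N.V) : Finset N.E := Finset.univ.filter fun e => N.dst e = v

/-- Cumulative network inflow `U_v(θ)`. -/
def cumInflow (v : N.V) (θ : ℝ) : ℝ := ∫ ζ in (0:ℝ)..θ, N.u v ζ

/-- Total inflow volume `U`. -/
def totalInflow : ℝ := ∑ v ∈ Finset.univ.erase N.sink, N.cumInflow v N.theta0

/-- `p` is a physically shortest `v`-`t` path. -/
def PhysShortest (v : N.V) (p : List N.E) : Prop :=
  N.IsWalk v p ∧ ∀ p', N.IsWalk v p' → N.pathTau p ≤ N.pathTau p'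

/-- Physical distance from `v` to the sink. -/
def physDist (v : N.V) : ℝ := sInf { x | ∃ p, N.IsWalk v p ∧ x = N.pathTau p }

/-- `E(T)`: edges with both endpoints in `T`. -/
def edgesIn (T : Finset N.V) : Finset N.E :=
  Finset.univ.filter fun e => N.src e ∈ T ∧ N.dst e ∈ T

/-- `δ⁻_T`: edges entering `T`. -/
def deltaMinus (T : Finset N.V) : Finset N.E :=
  Finset.univ.filter fun e => N.src e ∉ T ∧ N.dst e ∈ T

/-- `δ⁺_T`: edges leaving `T`. -/
def deltaPlus (T : Finset N.V) : Finset N.E :=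
  Finset.univ.filter fun e => N.src e ∈ T ∧ N.dst e ∉ T

/-- A flow over time: nonnegative, locally integrable edge in- and outflow rates,
vanishing for negative times. -/
structure Flow (N : Network) where
  fp : N.E → ℝ → ℝ
  fm : N.E → ℝ → ℝ
  fp_nonneg : ∀ e θ, 0 ≤ fp e θ
  fm_nonneg : ∀ e θ, 0 ≤ fm e θ
  fp_zero : ∀ e θ, θ < 0 → fp e θ = 0
  fp_locInt : ∀ e, MeasureTheory.LocallyIntegrable (fp e) MeasureTheory.volume
  fm_locInt : ∀ e, MeasureTheory.LocallyIntegrable (fm e) MeasureTheory.volume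

namespace Flow

variable {N : Network} (f : N.Flow)

/-- Cumulative edge inflow `F⁺_e`. -/
def Fp (e : N.E) (θ : ℝ) : ℝ := ∫ ζ in (0:ℝ)..θ, f.fp e ζ

/-- Cumulative edge outflow `F⁻_e`. -/
def Fm (e : N.E) (θ : ℝ) : ℝ := ∫ ζ in (0:ℝ)..θ, f.fm e ζ

/-- Queue length `q_e(θ) = F⁺_e(θ) - F⁻_e(θ + τ_e)`. -/
def queue (e : N.E) (θ : ℝ) : ℝ := f.Fp e θ - f.Fm e (θ + (N.tau e : ℝ))

/-- Edge load `F^Δ_e(θ) = F⁺_e(θ) - F⁻_e(θ)`. -/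
def load (e : N.E) (θ : ℝ) : ℝ := f.Fp e θ - f.Fm e θ

/-- Total flow volume in the network `F^Δ(θ)`. -/
def totalLoad (θ : ℝ) : ℝ := ∑ e, f.load e θ

/-- Flow volume having reached the sink, `Z(θ)`. -/
def Z (θ : ℝ) : ℝ :=
  ∑ e ∈ N.inEdges N.sink, f.Fm e θ - ∑ e ∈ N.outEdges N.sink, f.Fp e θ

/-- Instantaneous travel time `c_e(θ) = τ_e + q_e(θ)/ν_e`. -/
def c (e : N.E) (θ : ℝ) : ℝ := (N.tau e : ℝ) + f.queue e θ / (N.nu e : ℝ)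

/-- Node label `ℓ_v(θ)`: instantaneous distance from `v` to the sink. -/
def label (v : N.V) (θ : ℝ) : ℝ :=
  sInf { x | ∃ p, N.IsWalk v p ∧ x = (p.map fun e => f.c e θ).sum }

/-- Edge `e` is active at time `θ`. -/
def Active (e : N.E) (θ : ℝ) : Prop :=
  f.label (N.src e) θ = f.label (N.dst e) θ + f.c e θ

/-- `p` is an active `v`-`t` path at time `θ`. -/
def ActivePath (v : N.V) (p : List N.E) (θ : ℝ) : Prop :=
  N.IsWalk v p ∧ ∀ e ∈ p, f.Active e θ

/-- Feasibility of a flow over time: flow conservation at non-sink nodes,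
nonpositive excess at the sink, no outflow before `τ_e`, and queues operating
at capacity. -/
def Feasible : Prop :=
  (∀ v, v ≠ N.sink → ∀ᵐ θ ∂(volume : Measure ℝ), 0 ≤ θ →
      (∑ e ∈ N.outEdges v, f.fp e θ) - ∑ e ∈ N.inEdges v, f.fm e θ = N.u v θ) ∧
  (∀ᵐ θ ∂(volume : Measure ℝ), 0 ≤ θ →
      (∑ e ∈ N.outEdges N.sink, f.fp e θ) - ∑ e ∈ N.inEdges N.sink, f.fm e θ ≤ 0) ∧
  (∀ e θ, θ < (N.tau e : ℝ) → f.fm e θ = 0) ∧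
  (∀ e, ∀ᵐ θ ∂(volume : Measure ℝ), 0 ≤ θ →
      (0 < f.queue e θ → f.fm e (θ + (N.tau e : ℝ)) = (N.nu e : ℝ)) ∧
      (f.queue e θ ≤ 0 → f.fm e (θ + (N.tau e : ℝ)) = min (f.fp e θ) (N.nu e : ℝ)))

/-- Instantaneous dynamic equilibrium: a feasible flow only using active edges. -/
def IsIDE : Prop :=
  f.Feasible ∧ ∀ e, ∀ᵐ θ ∂(volume : Measure ℝ), 0 ≤ θ → 0 < f.fp e θ → f.Active e θ

/-- The flow terminates. -/
def Terminates : Prop := ∃ θ, N.theta0 ≤ θ ∧ f.totalLoad θ = 0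

/-- Makespan `Θ(f)`. -/
def makespan : ℝ := sInf { θ | N.theta0 ≤ θ ∧ f.totalLoad θ = 0 }

/-- Total travel time `Ψ(f)`. -/
def totalTravelTime : ℝ := ∑ e, ∫ θ in Set.Ici (0:ℝ), f.c e θ * f.fp e θ

/-- The induced subgraph on `T` is sink-like on `[θ1, θ2]`. -/
def SinkLike (T : Finset N.V) (θ1 θ2 : ℝ) : Prop :=
  N.sink ∈ T ∧
  (∀ v ∈ T, ∀ p, N.PhysShortest v p → ∀ e ∈ p, N.src e ∈ T ∧ N.dst e ∈ T) ∧
  (∑ e ∈ N.edgesIn T, f.load e θ1) +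
    (∑ e ∈ N.deltaMinus T, (f.Fm e θ2 - f.Fm e θ1)) +
    (∑ v ∈ T.erase N.sink, ∫ θ in θ1..θ2, N.u v θ) < 1/2

end Flow

end Network

section Aux

namespace Network.Flow

variable {N : Network} (f : N.Flow)

lemma fp_ii (e : N.E) (a b : ℝ) : IntervalIntegrable (f.fp e) volume a b :=
  ((f.fp_locInt e).integrableOn_isCompact isCompact_uIcc).intervalIntegrable

lemma fm_ii (e : N.E) (a b : ℝ) : IntervalIntegrable (f.fm e) volume a b :=
  ((f.fm_locInt e).integrableOn_isCompact isCompact_uIcc).intervalIntegrable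

lemma fm_shift_ii (e : N.E) (c a b : ℝ) :
    IntervalIntegrable (fun σ => f.fm e (σ + c)) volume a b := by
  simpa using (f.fm_ii e (a + c) (b + c)).comp_add_right c

lemma Fp_sub (e : N.E) (a b : ℝ) : f.Fp e b - f.Fp e a = ∫ σ in a..b, f.fp e σ := by
  have := intervalIntegral.integral_add_adjacent_intervals (f.fp_ii e 0 a) (f.fp_ii e a b)
  unfold Fp
  linarith

lemma Fm_sub (e : N.E) (a b : ℝ) : f.Fm e b - f.Fm e a = ∫ σ in a..b, f.fm e σ := by
  have := intervalIntegral.integral_add_adjacent_intervals (f.fm_ii e 0 a) (f.fm_ii e a b)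
  unfold Fm
  linarith

lemma Fm_shift_sub (e : N.E) (c a b : ℝ) :
    f.Fm e (b + c) - f.Fm e (a + c) = ∫ σ in a..b, f.fm e (σ + c) := by
  rw [f.Fm_sub e (a + c) (b + c), intervalIntegral.integral_comp_add_right (f.fm e) c]

lemma Fp_mono (e : N.E) {a b : ℝ} (h : a ≤ b) : f.Fp e a ≤ f.Fp e b := by
  have h1 := f.Fp_sub e a b
  have h2 : 0 ≤ ∫ σ in a..b, f.fp e σ :=
    intervalIntegral.integral_nonneg h fun u _ => f.fp_nonneg e u
  linarith

lemma Fm_mono (e : N.E) {a b : ℝ} (h : a ≤ b) : f.Fm e a ≤ f.Fm e b := by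
  have h1 := f.Fm_sub e a b
  have h2 : 0 ≤ ∫ σ in a..b, f.fm e σ :=
    intervalIntegral.integral_nonneg h fun u _ => f.fm_nonneg e u
  linarith

lemma Fp_cont (e : N.E) : Continuous (f.Fp e) :=
  intervalIntegral.continuous_primitive (f.fp_ii e) 0

lemma Fm_cont (e : N.E) : Continuous (f.Fm e) :=
  intervalIntegral.continuous_primitive (f.fm_ii e) 0

lemma queue_cont (e : N.E) : Continuous (f.queue e) :=
  (f.Fp_cont e).sub ((f.Fm_cont e).comp (continuous_id.add continuous_const))

lemma ae_ne (c : ℝ) : ∀ᵐ x : ℝ ∂(volume : Measure ℝ), x ≠ c := by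
  have h : (volume : Measure ℝ) {c} = 0 := measure_singleton c
  rw [ae_iff]
  simpa only [ne_eq, not_not, Set.setOf_eq_eq_singleton] using h

lemma Fp_nonpos (e : N.E) {θ : ℝ} (h : θ ≤ 0) : f.Fp e θ = 0 := by
  have : (∫ σ in (0:ℝ)..θ, f.fp e σ) = ∫ σ in (0:ℝ)..θ, (0:ℝ) := by
    apply intervalIntegral.integral_congr_ae
    filter_upwards [Network.Flow.ae_ne 0] with x hx0 hmem
    rw [Set.uIoc_of_ge h] at hmem
    exact f.fp_zero e x (lt_of_le_of_ne hmem.2 hx0)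
  unfold Fp
  rw [this, intervalIntegral.integral_zero]

lemma Fm_early (hnoe : ∀ e θ, θ < (N.tau e : ℝ) → f.fm e θ = 0) (e : N.E) {θ : ℝ}
    (h : θ ≤ (N.tau e : ℝ)) : f.Fm e θ = 0 := by
  have htau : (0:ℝ) ≤ (N.tau e : ℝ) := Nat.cast_nonneg _
  have : (∫ σ in (0:ℝ)..θ, f.fm e σ) = ∫ σ in (0:ℝ)..θ, (0:ℝ) := by
    apply intervalIntegral.integral_congr_ae
    filter_upwards [Network.Flow.ae_ne (N.tau e : ℝ)] with x hxt hmem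
    have hx : x ≤ (N.tau e : ℝ) := by
      rcases le_total (0:ℝ) θ with hc | hc
      · rw [Set.uIoc_of_le hc] at hmem; exact hmem.2.trans h
      · rw [Set.uIoc_of_ge hc] at hmem; exact hmem.2.trans htau
    exact hnoe e x (lt_of_le_of_ne hx hxt)
  unfold Fm
  rw [this, intervalIntegral.integral_zero]

lemma queue_nonneg (hf : f.Feasible) (e : N.E) (θ : ℝ) : 0 ≤ f.queue e θ := by
  by_contra hcon
  push_neg at hcon
  set Q : ℝ → ℝ := f.queue e with hQ
  have hQ0 : ∀ σ : ℝ, σ ≤ 0 → Q σ = 0 := by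
    intro σ hσ
    have h1 : f.Fp e σ = 0 := f.Fp_nonpos e hσ
    have h2 : f.Fm e (σ + (N.tau e : ℝ)) = 0 :=
      f.Fm_early hf.2.2.1 e (by linarith)
    simp [hQ, Flow.queue, h1, h2]
  have hθpos : 0 < θ := by
    by_contra hθ
    push_neg at hθ
    rw [hQ0 θ hθ] at hcon
    exact absurd hcon (lt_irrefl 0)
  set S : Set ℝ := Icc 0 θ ∩ Q ⁻¹' (Ici 0) with hS
  have hScl : IsClosed S := isClosed_Icc.inter (isClosed_Ici.preimage (f.queue_cont e))
  have hScpt : IsCompact S := isCompact_Icc.of_isClosed_subset hScl inter_subset_left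
  have hSne : S.Nonempty := ⟨0, ⟨le_rfl, le_of_lt hθpos⟩, by simp [hQ0 0 le_rfl]⟩
  set s := sSup S with hs
  have hsmem : s ∈ S := hScpt.sSup_mem hSne
  have hs0 : 0 ≤ s := hsmem.1.1
  have hsθ : s ≤ θ := hsmem.1.2
  have hQs : 0 ≤ Q s := hsmem.2
  have hslt : s < θ := lt_of_le_of_ne hsθ (fun hE => absurd hcon (not_lt.2 (hE ▸ hQs)))
  have hQneg : ∀ σ, s < σ → σ ≤ θ → Q σ < 0 := by
    intro σ h1 h2
    by_contra hc
    push_neg at hc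
    have : σ ∈ S := ⟨⟨le_trans hs0 (le_of_lt h1), h2⟩, hc⟩
    exact absurd (le_csSup hScpt.bddAbove this) (not_le.2 h1)
  -- integral comparison on [s, θ]
  have hmono : (∫ σ in s..θ, f.fm e (σ + (N.tau e : ℝ))) ≤ ∫ σ in s..θ, f.fp e σ := by
    apply intervalIntegral.integral_mono_ae_restrict (le_of_lt hslt)
      (f.fm_shift_ii e _ s θ) (f.fp_ii e s θ)
    have hae := hf.2.2.2 e
    filter_upwards [ae_restrict_of_ae hae, ae_restrict_mem measurableSet_Icc,
      ae_restrict_of_ae (Network.Flow.ae_ne s)] with σ hP hmem hne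
    have hσs : s < σ := lt_of_le_of_ne hmem.1 (Ne.symm hne)
    have h0σ : (0:ℝ) ≤ σ := le_trans hs0 (le_of_lt hσs)
    have := (hP h0σ).2 (le_of_lt (hQneg σ hσs hmem.2))
    rw [this]
    exact min_le_left _ _
  have e1 := f.Fp_sub e s θ
  have e2 := f.Fm_shift_sub e (N.tau e : ℝ) s θ
  have : Q θ - Q s = (f.Fp e θ - f.Fp e s) -
      (f.Fm e (θ + (N.tau e : ℝ)) - f.Fm e (s + (N.tau e : ℝ))) := by
    simp only [hQ, Flow.queue]; ring
  rw [e1, e2] at this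
  have : 0 ≤ Q θ - Q s + (Q s) := by
    have : Q θ - Q s ≥ 0 := by rw [this]; linarith
    linarith
  simp only [sub_add_cancel] at this
  exact absurd hcon (not_lt.2 this)

lemma load_nonneg (hf : f.Feasible) (e : N.E) (θ : ℝ) : 0 ≤ f.load e θ := by
  have h1 := f.queue_nonneg hf e (θ - (N.tau e : ℝ))
  have h2 : f.Fp e (θ - (N.tau e : ℝ)) ≤ f.Fp e θ := by
    apply f.Fp_mono
    have : (0:ℝ) ≤ (N.tau e : ℝ) := Nat.cast_nonneg _
    linarith
  simp only [Flow.queue, sub_add_cancel] at h1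
  simp only [Flow.load]
  linarith

lemma queue_le_load (e : N.E) (θ : ℝ) : f.queue e θ ≤ f.load e θ := by
  have : f.Fm e θ ≤ f.Fm e (θ + (N.tau e : ℝ)) := by
    apply f.Fm_mono
    have : (0:ℝ) ≤ (N.tau e : ℝ) := Nat.cast_nonneg _
    linarith
  simp only [Flow.queue, Flow.load]
  linarith

/-- Queue drain lemma: the cumulative outflow by time `b + τ` is at least
`min (Fp a) (Fm (a+τ) + ν (b-a))`. -/
lemma drain (hf : f.Feasible) (e : N.E) {a b : ℝ} (ha : 0 ≤ a) (hab : a ≤ b) :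
    min (f.Fp e a) (f.Fm e (a + (N.tau e : ℝ)) + (N.nu e : ℝ) * (b - a)) ≤
      f.Fm e (b + (N.tau e : ℝ)) := by
  by_cases hcase : f.Fp e a ≤ f.Fm e (b + (N.tau e : ℝ))
  · exact le_trans (min_le_left _ _) hcase
  push_neg at hcase
  have hqpos : ∀ σ, a ≤ σ → σ ≤ b → 0 < f.queue e σ := by
    intro σ h1 h2
    have hp : f.Fp e a ≤ f.Fp e σ := f.Fp_mono e h1
    have hm : f.Fm e (σ + (N.tau e : ℝ)) ≤ f.Fm e (b + (N.tau e : ℝ)) :=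
      f.Fm_mono e (by linarith)
    simp only [Flow.queue]
    linarith
  have hconst : (∫ σ in a..b, f.fm e (σ + (N.tau e : ℝ))) =
      ∫ σ in a..b, ((N.nu e : ℝ)) := by
    apply intervalIntegral.integral_congr_ae
    have hae := hf.2.2.2 e
    filter_upwards [hae] with σ hP hmem
    rw [Set.uIoc_of_le hab] at hmem
    have h0σ : (0:ℝ) ≤ σ := le_trans ha (le_of_lt hmem.1)
    exact (hP h0σ).1 (hqpos σ (le_of_lt hmem.1) hmem.2)
  have e2 := f.Fm_shift_sub e (N.tau e : ℝ) a b
  rw [hconst] at e2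
  rw [intervalIntegral.integral_const, smul_eq_mul] at e2
  have : f.Fm e (b + (N.tau e : ℝ)) =
      f.Fm e (a + (N.tau e : ℝ)) + (N.nu e : ℝ) * (b - a) := by linarith [e2]
  rw [this]
  exact min_le_right _ _

lemma sum3_le {α : Type*} [DecidableEq α] {A B D : Finset α} {e : α} {W : α → ℝ}
    (hW : ∀ x, 0 ≤ W x) (hAD : A ⊆ D) (hBD : B ⊆ D) (heD : e ∈ D)
    (hAB : Disjoint A B) (heA : e ∉ A) (heB : e ∉ B) :
    ∑ x ∈ A, W x + ∑ x ∈ B, W x + W e ≤ ∑ x ∈ D, W x := by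
  have h2 : Disjoint (A ∪ B) {e} := by
    rw [Finset.disjoint_singleton_right, Finset.mem_union]
    rintro (h | h)
    exacts [heA h, heB h]
  have hsub : (A ∪ B) ∪ {e} ⊆ D := by
    intro x hx
    rcases Finset.mem_union.1 hx with hx | hx
    · rcases Finset.mem_union.1 hx with hx | hx
      exacts [hAD hx, hBD hx]
    · rw [Finset.mem_singleton.1 hx]; exact heD
  calc ∑ x ∈ A, W x + ∑ x ∈ B, W x + W e
      = ∑ x ∈ (A ∪ B) ∪ {e}, W x := by
        rw [Finset.sum_union h2, Finset.sum_union hAB, Finset.sum_singleton]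
    _ ≤ ∑ x ∈ D, W x := Finset.sum_le_sum_of_subset_of_nonneg hsub fun i _ _ => hW i

end Network.Flow

end Aux

/-- on every edge from `v` into the sink-like subgraph `T`
the flow volume stays below `1/2` throughout `[θ1, θ_v]`, and all this flow
reaches `T` before `θ2`. -/
theorem flow_from_v_reaches_T_fast (N : Network) (hreach : N.Reachable)
    (f : N.Flow) (hf : f.IsIDE) (T : Finset N.V) (htT : N.sink ∈ T)
    (hproper : T ≠ Finset.univ) (v : N.V) (hv : v ∉ T)
    (hmin : ∀ w : N.V, w ∉ T → N.physDist v ≤ N.physDist w)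
    (θ1 θ2 θ2' θv : ℝ) (hθ1 : 0 ≤ θ1)
    (hθ2 : θ2 = θ1 + ∑ e ∈ Finset.univ \ N.edgesIn T,
      ((N.tau e : ℝ) + 1 / (2 * (N.nu e : ℝ))))
    (hθ2' : θ2' = θ1 + ∑ e ∈ Finset.univ \ N.edgesIn (insert v T),
      ((N.tau e : ℝ) + 1 / (2 * (N.nu e : ℝ))))
    (hθv : θv = θ2' + ∑ e ∈ N.inEdges v ∩ N.deltaPlus T,
      ((N.tau e : ℝ) + 1 / (2 * (N.nu e : ℝ))))
    (hsl : f.SinkLike T θ1 θ2)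
    (e : N.E) (he : e ∈ N.outEdges v ∩ N.deltaMinus T) :
    (∀ θ : ℝ, θ1 ≤ θ → θ ≤ θv → f.load e θ < 1/2) ∧
    f.load e θ1 + (f.Fp e θv - f.Fp e θ1) ≤ f.Fm e θ2 - f.Fm e θ1 := by
  classical
  have hfeas : f.Feasible := hf.1
  -- unpack edge membership
  have he2 : e ∈ N.deltaMinus T := (Finset.mem_inter.1 he).2
  have hsrceq : N.src e = v :=
    (Finset.mem_filter.1 (Finset.mem_inter.1 he).1).2
  have hsrcT : N.src e ∉ T := (Finset.mem_filter.1 he2).2.1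
  have hdstT : N.dst e ∈ T := (Finset.mem_filter.1 he2).2.2
  -- weights
  have hWnonneg : ∀ x : N.E, (0:ℝ) ≤ (N.tau x : ℝ) + 1 / (2 * (N.nu x : ℝ)) :=
    fun x => by positivity
  have hνpos : (0:ℝ) < (N.nu e : ℝ) := by exact_mod_cast N.nu_pos e
  have hτnn : (0:ℝ) ≤ (N.tau e : ℝ) := Nat.cast_nonneg _
  have h2ν : (0:ℝ) ≤ 1 / (2 * (N.nu e : ℝ)) := by positivity
  have hhalf : (N.nu e : ℝ) * (1 / (2 * (N.nu e : ℝ))) = 1 / 2 := by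
    field_simp
  -- finset memberships
  have heD : e ∈ Finset.univ \ N.edgesIn T :=
    Finset.mem_sdiff.2 ⟨Finset.mem_univ e, fun h => hsrcT ((Finset.mem_filter.1 h).2.1)⟩
  have heA : e ∉ Finset.univ \ N.edgesIn (insert v T) := by
    intro h
    refine (Finset.mem_sdiff.1 h).2 (Finset.mem_filter.2 ⟨Finset.mem_univ e, ?_, ?_⟩)
    · rw [hsrceq]; exact Finset.mem_insert_self v T
    · exact Finset.mem_insert_of_mem hdstT
  have heB : e ∉ N.inEdges v ∩ N.deltaPlus T := by
    intro h
    exact (Finset.mem_filter.1 (Finset.mem_inter.1 h).2).2.2 hdstT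
  have hAD : Finset.univ \ N.edgesIn (insert v T) ⊆ Finset.univ \ N.edgesIn T := by
    intro x hx
    rcases Finset.mem_sdiff.1 hx with ⟨-, hx2⟩
    refine Finset.mem_sdiff.2 ⟨Finset.mem_univ x, fun h => hx2 ?_⟩
    have h' := Finset.mem_filter.1 h
    exact Finset.mem_filter.2 ⟨Finset.mem_univ x, Finset.mem_insert_of_mem h'.2.1,
      Finset.mem_insert_of_mem h'.2.2⟩
  have hBD : N.inEdges v ∩ N.deltaPlus T ⊆ Finset.univ \ N.edgesIn T := by
    intro x hx
    have hd := (Finset.mem_filter.1 (Finset.mem_inter.1 hx).2).2.2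
    exact Finset.mem_sdiff.2 ⟨Finset.mem_univ x, fun h => hd ((Finset.mem_filter.1 h).2.2)⟩
  have hAB : Disjoint (Finset.univ \ N.edgesIn (insert v T)) (N.inEdges v ∩ N.deltaPlus T) := by
    rw [Finset.disjoint_left]
    intro x hx hxB
    have h1 := (Finset.mem_filter.1 (Finset.mem_inter.1 hxB).1).2
    have h2 := (Finset.mem_filter.1 (Finset.mem_inter.1 hxB).2).2.1
    refine (Finset.mem_sdiff.1 hx).2 (Finset.mem_filter.2
      ⟨Finset.mem_univ x, Finset.mem_insert_of_mem h2, ?_⟩)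
    rw [h1]; exact Finset.mem_insert_self v T
  have hsum := Network.Flow.sum3_le (W := fun x => (N.tau x : ℝ) + 1 / (2 * (N.nu x : ℝ)))
    hWnonneg hAD hBD heD hAB heA heB
  -- time comparisons
  have hsumD : (0:ℝ) ≤ ∑ x ∈ Finset.univ \ N.edgesIn T,
      ((N.tau x : ℝ) + 1 / (2 * (N.nu x : ℝ))) :=
    Finset.sum_nonneg fun i _ => hWnonneg i
  have hsumA : (0:ℝ) ≤ ∑ x ∈ Finset.univ \ N.edgesIn (insert v T),
      ((N.tau x : ℝ) + 1 / (2 * (N.nu x : ℝ))) :=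
    Finset.sum_nonneg fun i _ => hWnonneg i
  have hsumB : (0:ℝ) ≤ ∑ x ∈ N.inEdges v ∩ N.deltaPlus T,
      ((N.tau x : ℝ) + 1 / (2 * (N.nu x : ℝ))) :=
    Finset.sum_nonneg fun i _ => hWnonneg i
  have hθ1θ2 : θ1 ≤ θ2 := by rw [hθ2]; linarith
  have hθ1θv : θ1 ≤ θv := by rw [hθv, hθ2']; linarith
  have hkey2 : θv + ((N.tau e : ℝ) + 1 / (2 * (N.nu e : ℝ))) ≤ θ2 := by
    rw [hθv, hθ2', hθ2]; linarith [hsum]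
  -- key bound from sink-likeness
  have hbound := hsl.2.2
  have hS1 : (0:ℝ) ≤ ∑ e' ∈ N.edgesIn T, f.load e' θ1 :=
    Finset.sum_nonneg fun i _ => f.load_nonneg hfeas i θ1
  have hS3 : (0:ℝ) ≤ ∑ v' ∈ T.erase N.sink, ∫ θ in θ1..θ2, N.u v' θ :=
    Finset.sum_nonneg fun i _ =>
      intervalIntegral.integral_nonneg hθ1θ2 fun u _ => N.u_nonneg i u
  have hS2 : f.Fm e θ2 - f.Fm e θ1 ≤ ∑ e' ∈ N.deltaMinus T, (f.Fm e' θ2 - f.Fm e' θ1) :=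
    Finset.single_le_sum (f := fun e' => f.Fm e' θ2 - f.Fm e' θ1)
      (fun i _ => sub_nonneg.2 (f.Fm_mono i hθ1θ2)) he2
  have key1 : f.Fm e θ2 - f.Fm e θ1 < 1 / 2 := by linarith
  have hθ2eq : θ2 - (N.tau e : ℝ) + (N.tau e : ℝ) = θ2 := by ring
  -- Part 1
  have part1 : ∀ θ : ℝ, θ1 ≤ θ → θ ≤ θv → f.load e θ < 1 / 2 := by
    intro θ hθa hθb
    by_contra hcon
    push_neg at hcon
    have h0θ : (0:ℝ) ≤ θ := le_trans hθ1 hθa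
    have hab : θ ≤ θ2 - (N.tau e : ℝ) := by linarith
    have hdrain := f.drain hfeas e h0θ hab
    rw [hθ2eq] at hdrain
    have hFpθ : f.Fm e θ1 + 1 / 2 ≤ f.Fp e θ := by
      have hm := f.Fm_mono e hθa
      have hload : f.load e θ = f.Fp e θ - f.Fm e θ := rfl
      linarith
    have hFm' : f.Fm e θ1 + 1 / 2 ≤
        f.Fm e (θ + (N.tau e : ℝ)) + (N.nu e : ℝ) * (θ2 - (N.tau e : ℝ) - θ) := by
      have h1 : f.Fm e θ1 ≤ f.Fm e (θ + (N.tau e : ℝ)) := f.Fm_mono e (by linarith)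
      have h2 : 1 / (2 * (N.nu e : ℝ)) ≤ θ2 - (N.tau e : ℝ) - θ := by linarith
      have h3 : (N.nu e : ℝ) * (1 / (2 * (N.nu e : ℝ))) ≤
          (N.nu e : ℝ) * (θ2 - (N.tau e : ℝ) - θ) :=
        mul_le_mul_of_nonneg_left h2 (le_of_lt hνpos)
      rw [hhalf] at h3
      linarith
    have : f.Fm e θ1 + 1 / 2 ≤ f.Fm e θ2 := le_trans (le_min hFpθ hFm') hdrain
    linarith
  refine ⟨part1, ?_⟩
  -- Part 2
  have hloadv := part1 θv hθ1θv le_rfl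
  have hq : f.queue e θv ≤ f.load e θv := f.queue_le_load e θv
  have h0v : (0:ℝ) ≤ θv := le_trans hθ1 hθ1θv
  have habv : θv ≤ θ2 - (N.tau e : ℝ) := by linarith
  have hdrain := f.drain hfeas e h0v habv
  rw [hθ2eq] at hdrain
  have hmin2 : f.Fp e θv ≤
      f.Fm e (θv + (N.tau e : ℝ)) + (N.nu e : ℝ) * (θ2 - (N.tau e : ℝ) - θv) := by
    have hqdef : f.queue e θv = f.Fp e θv - f.Fm e (θv + (N.tau e : ℝ)) := rfl
    have h2 : 1 / (2 * (N.nu e : ℝ)) ≤ θ2 - (N.tau e : ℝ) - θv := by linarith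
    have h3 : (N.nu e : ℝ) * (1 / (2 * (N.nu e : ℝ))) ≤
        (N.nu e : ℝ) * (θ2 - (N.tau e : ℝ) - θv) :=
      mul_le_mul_of_nonneg_left h2 (le_of_lt hνpos)
    rw [hhalf] at h3
    linarith
  have hfinal : f.Fp e θv ≤ f.Fm e θ2 := le_trans (le_min le_rfl hmin2) hdrain
  have hload1 : f.load e θ1 = f.Fp e θ1 - f.Fm e θ1 := rfl
  linarith


end
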